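/- For every f : 𝔹^N → 𝔹^N, every point (S,E) ∈ X, and every ε > 0, there exists a point (S',E') ∈ X with d((S,E),(S',E')) < ε such that the strategy S' is eventually constant equal to 1, and (S',E') is eventually periodic under G_f (its orbit reaches a periodic point). -/

import Mathlib

open Finset

/-- Distance between boolean states: number of differing cells. -/
def dE (N : ℕ) (E F : Fin N → Bool) : ℝ :=
  ∑ k : Fin N, if E k = F k then 0 else 1

/-- Distance between strategies. -/
noncomputable def dS (N : ℕ) (S T : ℕ → Fin N) : ℝ :=
  (9 / N) * ∑' k : ℕ, |((S k : ℕ) : ℝ) - ((T k : ℕ) : ℝ)| / 10 ^ (k + 1)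

/-- The distance on the phase space X = ⟦1;N⟧^ℕ × 𝔹^N. -/
noncomputable def dX (N : ℕ) (x y : (ℕ → Fin N) × (Fin N → Bool)) : ℝ :=
  dE N x.2 y.2 + dS N x.1 y.1

/-- F_f(k,E): update only coordinate k of E to f(E)_k. -/
def Ff (N : ℕ) (f : (Fin N → Bool) → Fin N → Bool) (k : Fin N) (E : Fin N → Bool) :
    Fin N → Bool :=
  Function.update E k (f E k)

/-- The map G_f(S,E) = (σ(S), F_f(S⁰,E)). -/
def Gf (N : ℕ) (f : (Fin N → Bool) → Fin N → Bool)
    (x : (ℕ → Fin N) × (Fin N → Bool)) : (ℕ → Fin N) × (Fin N → Bool) :=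
  (fun n => x.1 (n + 1), Ff N f (x.1 0) x.2)

/-- The vectorial negation f₀. -/
def f0 (N : ℕ) (E : Fin N → Bool) : Fin N → Bool := fun k => !E k

/-!
Cut the strategy off after `M` terms and continue it by the constant cell `⟨0, hN⟩` (the
paper's cell `1`; `Fin N` counts cells from `0`): the distance to the original point is then
at most `10 ^ (-M)`. After `M` steps of `G_f` the strategy is constant, and the points with
that constant strategy form a finite `G_f`-invariant set, on which every orbit is eventually
periodic.
-/

open Function Set

theorem Function.exists_iterate_mem_periodicPts_of_mapsTo {α : Type*} {g : α → α} {s : Set α}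
    (hs : s.Finite) (hg : MapsTo g s s) {x : α} (hx : x ∈ s) :
    ∃ m, g^[m] x ∈ periodicPts g := by
  obtain ⟨m, n, hmn, hrep⟩ :=
    hs.exists_lt_map_eq_of_forall_mem (f := fun n => g^[n] x) fun n => hg.iterate n hx
  refine ⟨m, mk_mem_periodicPts (Nat.sub_pos_of_lt hmn) ?_⟩
  rw [IsPeriodicPt, IsFixedPt, ← iterate_add_apply, Nat.sub_add_cancel hmn.le]
  exact hrep.symm

lemma abs_natCast_sub_natCast_le {N : ℕ} (a b : Fin N) :
    |((a : ℕ) : ℝ) - ((b : ℕ) : ℝ)| ≤ N :=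
  abs_sub_le_of_nonneg_of_le (Nat.cast_nonneg _) (by exact_mod_cast a.is_lt.le)
    (Nat.cast_nonneg _) (by exact_mod_cast b.is_lt.le)

section StrategyDistance

variable {N : ℕ} (S T : ℕ → Fin N)

lemma dS_term_le (k : ℕ) :
    |((S k : ℕ) : ℝ) - ((T k : ℕ) : ℝ)| / 10 ^ (k + 1) ≤
      N * (1 / 10 : ℝ) ^ (k + 1) := by
  rw [div_le_iff₀ (by positivity), mul_assoc, ← mul_pow, one_div_mul_cancel (by norm_num),
    one_pow, mul_one]
  exact abs_natCast_sub_natCast_le _ _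

lemma summable_dS_term :
    Summable fun k => |((S k : ℕ) : ℝ) - ((T k : ℕ) : ℝ)| / 10 ^ (k + 1) := by
  refine Summable.of_nonneg_of_le (fun k => by positivity) (dS_term_le S T) ?_
  exact (summable_nat_add_iff 1).2
    ((summable_geometric_of_lt_one (by norm_num) (by norm_num)).mul_left _)

lemma dS_le_of_forall_lt_eq {M : ℕ} (h : ∀ k < M, S k = T k) :
    dS N S T ≤ (1 / 10 : ℝ) ^ M := by
  set u := fun k => |((S k : ℕ) : ℝ) - ((T k : ℕ) : ℝ)| / 10 ^ (k + 1)
  have hu : Summable u := summable_dS_term S T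
  have hprefix : ∑ k ∈ range M, u k = 0 :=
    sum_eq_zero fun k hk => by simp [u, h k (mem_range.1 hk)]
  have htail : HasSum (fun k => N * (1 / 10 : ℝ) ^ (k + M + 1)) (N * (1 / 10) ^ M / 9) := by
    have hgeom := (hasSum_geometric_of_lt_one (r := (1 / 10 : ℝ)) (by norm_num)
      (by norm_num)).mul_left (N * (1 / 10 : ℝ) ^ (M + 1))
    rw [show (N : ℝ) * (1 / 10) ^ (M + 1) * (1 - 1 / 10)⁻¹ = N * (1 / 10) ^ M / 9 by ring]
      at hgeom
    have hterm (k : ℕ) :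
        (N : ℝ) * (1 / 10) ^ (k + M + 1) = N * (1 / 10) ^ (M + 1) * (1 / 10) ^ k := by
      ring
    simpa only [hterm] using hgeom
  have hsum : ∑' k, u k ≤ N * (1 / 10) ^ M / 9 := by
    rw [← hu.sum_add_tsum_nat_add M, hprefix, zero_add]
    exact hasSum_le (fun k => dS_term_le S T (k + M))
      ((summable_nat_add_iff M).2 hu).hasSum htail
  calc dS N S T ≤ 9 / N * (N * (1 / 10) ^ M / 9) := by
        unfold dS; gcongr
    _ = (N / N) * (1 / 10 : ℝ) ^ M := by ring
    _ ≤ (1 / 10 : ℝ) ^ M := mul_le_of_le_one_left (by positivity) (div_self_le_one _)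

end StrategyDistance

section Dynamics

variable {N : ℕ} (f : (Fin N → Bool) → Fin N → Bool)

lemma Gf_iterate_fst (n : ℕ) (z : (ℕ → Fin N) × (Fin N → Bool)) :
    ((Gf N f)^[n] z).1 = fun k => z.1 (k + n) := by
  induction n generalizing z with
  | zero => rfl
  | succ n ih =>
    rw [iterate_succ_apply, ih]
    funext k
    simp only [Gf]
    congr 1

lemma mapsTo_Gf_constStrategy (a : Fin N) :
    MapsTo (Gf N f) (({fun _ => a} : Set (ℕ → Fin N)) ×ˢ univ)
      (({fun _ => a} : Set (ℕ → Fin N)) ×ˢ univ) := by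
  rintro ⟨S, E⟩ ⟨rfl, -⟩
  exact ⟨rfl, trivial⟩

end Dynamics

/-- arbitrarily close to any point there is a point whose strategy is
eventually constant equal to 1 and whose G_f-orbit is eventually periodic. -/
theorem eventually_periodic_dense (N : ℕ) (hN : 1 ≤ N)
    (f : (Fin N → Bool) → Fin N → Bool)
    (x : (ℕ → Fin N) × (Fin N → Bool)) (ε : ℝ) (hε : 0 < ε) :
    ∃ y : (ℕ → Fin N) × (Fin N → Bool),
      dX N y x < ε ∧
      (∃ n₀, ∀ n ≥ n₀, y.1 n = (⟨0, hN⟩ : Fin N)) ∧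
      (∃ m, ∃ p ≥ 1, (Gf N f)^[p] ((Gf N f)^[m] y) = (Gf N f)^[m] y) := by
  obtain ⟨M, hM⟩ : ∃ M : ℕ, (1 / 10 : ℝ) ^ M < ε :=
    exists_pow_lt_of_lt_one hε (by norm_num)
  set k₀ : Fin N := ⟨0, hN⟩
  set S : ℕ → Fin N := fun n => if n < M then x.1 n else k₀
  refine ⟨(S, x.2), ?_, ⟨M, fun n hn => if_neg (Nat.not_lt.2 hn)⟩, ?_⟩
  · calc dX N (S, x.2) x = dS N S x.1 := by simp [dX, dE]
      _ ≤ (1 / 10) ^ M := dS_le_of_forall_lt_eq S x.1 fun k hk => if_pos hk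
      _ < ε := hM
  · have hconst : (Gf N f)^[M] (S, x.2) ∈ ({fun _ => k₀} : Set (ℕ → Fin N)) ×ˢ univ := by
      refine ⟨?_, trivial⟩
      rw [Gf_iterate_fst]
      ext k
      simp [S]
    obtain ⟨m, p, hp, hper⟩ := exists_iterate_mem_periodicPts_of_mapsTo
      ((finite_singleton _).prod finite_univ) (mapsTo_Gf_constStrategy f k₀) hconst
    exact ⟨m + M, p, hp, by rwa [iterate_add_apply]⟩
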